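/- arXiv:2501.13265 — 4 statements merged into one kernel-verified Lean document; each statement's English description precedes it below -/
import Mathlib

section
/- The function μ(s) = −|s|·sin(π/(2·min(1,|s|))) satisfies lim_{η↓0} (μ(s+η) − μ(s))/√η = 0 for every s ∈ ℝ, but μ is not absolutely continuous on any interval containing 0. -/
open MeasureTheory Filter

/-- `μ(s) = −|s|·sin((π/2)/min(1,|s|))`, with `μ(0) = 0`. -/
noncomputable def muOsc (s : ℝ) : ℝ :=
  if s = 0 then 0 else -|s| * Real.sin ((Real.pi / 2) / min 1 |s|)

lemma muOsc_zero : muOsc 0 = 0 := by simp [muOsc]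

lemma abs_muOsc_le (s : ℝ) : |muOsc s| ≤ |s| := by
  by_cases hs : s = 0
  · simp [hs, muOsc]
  · rw [muOsc, if_neg hs, abs_mul, abs_neg, abs_abs]
    nlinarith [Real.abs_sin_le_one ((Real.pi / 2) / min 1 |s|), abs_nonneg s,
      abs_nonneg (Real.sin ((Real.pi / 2) / min 1 |s|))]

lemma sin_lip (a b : ℝ) : |Real.sin a - Real.sin b| ≤ |a - b| := by
  rw [Real.sin_sub_sin, abs_mul, abs_mul]
  have h1 : |Real.sin ((a - b) / 2)| ≤ |a - b| / 2 := by
    have := Real.abs_sin_le_abs (x := (a - b) / 2)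
    rwa [abs_div, abs_two] at this
  have h2 : |Real.cos ((a + b) / 2)| ≤ 1 := Real.abs_cos_le_one _
  have h3 : |(2:ℝ)| = 2 := abs_two
  calc |(2:ℝ)| * |Real.sin ((a - b) / 2)| * |Real.cos ((a + b) / 2)|
      ≤ 2 * (|a - b| / 2) * 1 := by
        rw [h3]; gcongr
    _ = |a - b| := by ring

/-- Local Lipschitz bound away from zero. -/
lemma muOsc_lip {t u δ : ℝ} (hδ : 0 < δ) (hδt : δ ≤ |t|) (hδu : δ ≤ |u|) :
    |muOsc t - muOsc u| ≤ (1 + |u| * ((Real.pi / 2) / (min 1 δ) ^ 2)) * |t - u| := by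
  have ht : t ≠ 0 := by
    intro h; rw [h, abs_zero] at hδt; linarith
  have hu : u ≠ 0 := by
    intro h; rw [h, abs_zero] at hδu; linarith
  set x := min 1 |t| with hx
  set y := min 1 |u| with hy
  set m := min 1 δ with hm
  have hm0 : 0 < m := lt_min one_pos hδ
  have hmx : m ≤ x := min_le_min le_rfl hδt
  have hmy : m ≤ y := min_le_min le_rfl hδu
  have hx0 : 0 < x := lt_of_lt_of_le hm0 hmx
  have hy0 : 0 < y := lt_of_lt_of_le hm0 hmy
  have hc : (0:ℝ) < Real.pi / 2 := by positivity
  have hxy : |x - y| ≤ |t - u| := by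
    calc |x - y| ≤ max |1 - 1| (abs (|t| - |u|)) := abs_min_sub_min_le_max 1 |t| 1 |u|
      _ = abs (|t| - |u|) := by simp
      _ ≤ |t - u| := abs_abs_sub_abs_le_abs_sub t u
  have hdiv : |(Real.pi / 2) / x - (Real.pi / 2) / y| ≤ (Real.pi / 2) / m ^ 2 * |t - u| := by
    have heq : (Real.pi / 2) / x - (Real.pi / 2) / y = (Real.pi / 2) * (y - x) / (x * y) := by
      field_simp
    rw [heq, abs_div, abs_mul]
    have habs : |x * y| = x * y := abs_of_pos (mul_pos hx0 hy0)
    rw [habs, abs_of_pos hc]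
    have hm2 : m ^ 2 ≤ x * y := by nlinarith
    have hyx : |y - x| ≤ |t - u| := by rw [abs_sub_comm] at hxy; exact hxy
    calc Real.pi / 2 * |y - x| / (x * y) ≤ Real.pi / 2 * |t - u| / (m ^ 2) := by
          apply div_le_div₀ (by positivity) (by nlinarith) (by positivity) hm2
      _ = Real.pi / 2 / m ^ 2 * |t - u| := by ring
  rw [muOsc, if_neg ht, muOsc, if_neg hu, ← hx, ← hy]
  have key : -|t| * Real.sin ((Real.pi / 2) / x) - -|u| * Real.sin ((Real.pi / 2) / y)
      = -((|t| - |u|) * Real.sin ((Real.pi / 2) / x)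
        + |u| * (Real.sin ((Real.pi / 2) / x) - Real.sin ((Real.pi / 2) / y))) := by ring
  rw [key, abs_neg]
  calc |(|t| - |u|) * Real.sin ((Real.pi / 2) / x)
        + |u| * (Real.sin ((Real.pi / 2) / x) - Real.sin ((Real.pi / 2) / y))|
      ≤ |(|t| - |u|) * Real.sin ((Real.pi / 2) / x)|
        + |(|u|) * (Real.sin ((Real.pi / 2) / x) - Real.sin ((Real.pi / 2) / y))| :=
        abs_add_le _ _
    _ ≤ |t - u| + |u| * ((Real.pi / 2) / m ^ 2 * |t - u|) := by
        apply add_le_add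
        · rw [abs_mul]
          calc (abs (|t| - |u|)) * |Real.sin ((Real.pi / 2) / x)| ≤ |t - u| * 1 := by
                apply mul_le_mul (abs_abs_sub_abs_le_abs_sub t u) (Real.abs_sin_le_one _)
                  (abs_nonneg _) (abs_nonneg _)
            _ = |t - u| := mul_one _
        · rw [abs_mul, abs_abs]
          exact mul_le_mul_of_nonneg_left
            (le_trans (sin_lip _ _) hdiv) (abs_nonneg u)
    _ = (1 + |u| * ((Real.pi / 2) / m ^ 2)) * |t - u| := by ring

/-- Value at the oscillation points. -/
lemma muOsc_point (j : ℕ) :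
    muOsc (1 / (2 * (j:ℝ) + 1)) = -((-1) ^ j / (2 * (j:ℝ) + 1)) := by
  have hd : (0:ℝ) < 2 * (j:ℝ) + 1 := by positivity
  set s : ℝ := 1 / (2 * (j:ℝ) + 1) with hs
  have hs0 : 0 < s := by positivity
  have hs1 : s ≤ 1 := by
    rw [hs, div_le_one hd]; push_cast; linarith [Nat.cast_nonneg (α := ℝ) j]
  have habs : |s| = s := abs_of_pos hs0
  have hmin : min 1 |s| = s := by rw [habs]; exact min_eq_right hs1
  rw [muOsc, if_neg (ne_of_gt hs0), habs, min_eq_right hs1]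
  have harg : (Real.pi / 2) / s = (j:ℝ) * Real.pi + Real.pi / 2 := by
    have hne : (2 * (j:ℝ) + 1) ≠ 0 := ne_of_gt hd
    rw [hs]; field_simp
  rw [harg, Real.sin_add_pi_div_two]
  have hcos : Real.cos ((j:ℝ) * Real.pi) = (-1) ^ j := by
    have := Real.cos_nat_mul_pi_sub 0 j
    simpa using this
  rw [hcos, hs]
  ring

lemma muOsc_jump (j : ℕ) :
    1 / (4 * ((j:ℝ) + 1)) ≤
      |muOsc (1 / (2 * (j:ℝ) + 1)) - muOsc (1 / (2 * ((j:ℝ) + 1) + 1))| := by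
  have h1 := muOsc_point j
  have h2 := muOsc_point (j + 1)
  push_cast at h2
  rw [h1, h2]
  have hd1 : (0:ℝ) < 2 * (j:ℝ) + 1 := by positivity
  have hd2 : (0:ℝ) < 2 * ((j:ℝ) + 1) + 1 := by positivity
  have key : -((-1) ^ j / (2 * (j:ℝ) + 1)) - -((-1) ^ (j + 1) / (2 * ((j:ℝ) + 1) + 1))
      = -(-1:ℝ) ^ j * (1 / (2 * (j:ℝ) + 1) + 1 / (2 * ((j:ℝ) + 1) + 1)) := by
    rw [pow_succ]; ring
  rw [key, abs_mul]
  have habs1 : |(-(-1:ℝ) ^ j)| = 1 := by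
    rw [abs_neg, abs_pow, abs_neg, abs_one, one_pow]
  rw [habs1, one_mul]
  have hpos : (0:ℝ) < 1 / (2 * (j:ℝ) + 1) + 1 / (2 * ((j:ℝ) + 1) + 1) := by positivity
  rw [abs_of_pos hpos]
  have : 1 / (4 * ((j:ℝ) + 1)) ≤ 1 / (2 * (j:ℝ) + 1) := by
    apply one_div_le_one_div_of_le hd1; linarith
  have h2' : (0:ℝ) ≤ 1 / (2 * ((j:ℝ) + 1) + 1) := by positivity
  linarith

theorem muOsc_limit_but_not_absolutely_continuous :
    (∀ s : ℝ,
      Tendsto (fun η : ℝ => (muOsc (s + η) - muOsc s) / Real.sqrt η)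
        (nhdsWithin 0 (Set.Ioi 0)) (nhds 0)) ∧
    (∀ a b : ℝ, a < 0 → 0 < b → ¬ BoundedVariationOn muOsc (Set.Icc a b)) := by
  constructor
  · intro s
    have hsqrt : Tendsto (fun η : ℝ => Real.sqrt η) (nhdsWithin 0 (Set.Ioi 0)) (nhds 0) := by
      have : Tendsto Real.sqrt (nhds 0) (nhds 0) := by
        simpa using Real.continuous_sqrt.tendsto 0
      exact this.mono_left nhdsWithin_le_nhds
    by_cases hs : s = 0
    · subst hs
      have hbound : ∀ᶠ η in nhdsWithin (0:ℝ) (Set.Ioi 0),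
          ‖(muOsc (0 + η) - muOsc 0) / Real.sqrt η‖ ≤ Real.sqrt η := by
        filter_upwards [self_mem_nhdsWithin] with η (hη : (0:ℝ) < η)
        have hsq : 0 < Real.sqrt η := Real.sqrt_pos.2 hη
        rw [Real.norm_eq_abs, abs_div, abs_of_pos hsq]
        have hnum : |muOsc (0 + η) - muOsc 0| ≤ η := by
          rw [zero_add, muOsc_zero, sub_zero]
          calc |muOsc η| ≤ |η| := abs_muOsc_le η
            _ = η := abs_of_pos hη
        calc |muOsc (0 + η) - muOsc 0| / Real.sqrt η ≤ η / Real.sqrt η := by gcongr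
          _ = Real.sqrt η := Real.div_sqrt
      exact squeeze_zero_norm' hbound hsqrt
    · set δ := |s| / 2 with hδdef
      have hδ : 0 < δ := by
        have : 0 < |s| := abs_pos.2 hs
        positivity
      set K := 1 + |s| * ((Real.pi / 2) / (min 1 δ) ^ 2) with hK
      have hK0 : 0 ≤ K := by rw [hK]; positivity
      have hbound : ∀ᶠ η in nhdsWithin (0:ℝ) (Set.Ioi 0),
          ‖(muOsc (s + η) - muOsc s) / Real.sqrt η‖ ≤ K * Real.sqrt η := by
        filter_upwards [Ioo_mem_nhdsGT hδ] with η hη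
        obtain ⟨hη0, hηδ⟩ := hη
        have hsq : 0 < Real.sqrt η := Real.sqrt_pos.2 hη0
        have hδt : δ ≤ |s + η| := by
          have h1 : |s| - |(-η)| ≤ |s + η| := by
            have := abs_sub_abs_le_abs_sub s (-η)
            simpa [sub_neg_eq_add] using this
          rw [abs_neg, abs_of_pos hη0] at h1
          rw [hδdef]; linarith
        have hδu : δ ≤ |s| := by rw [hδdef]; linarith [abs_pos.2 hs]
        have hlip := muOsc_lip hδ hδt hδu
        rw [Real.norm_eq_abs, abs_div, abs_of_pos hsq]
        have hnum : |muOsc (s + η) - muOsc s| ≤ K * η := by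
          calc |muOsc (s + η) - muOsc s| ≤ K * |s + η - s| := hlip
            _ = K * η := by rw [add_sub_cancel_left, abs_of_pos hη0]
        calc |muOsc (s + η) - muOsc s| / Real.sqrt η ≤ K * η / Real.sqrt η := by gcongr
          _ = K * Real.sqrt η := by rw [mul_div_assoc, Real.div_sqrt]
      exact squeeze_zero_norm' hbound (by simpa using hsqrt.const_mul K)
  · intro a b ha hb hBV
    -- choose K with 1/(2K+1) ≤ b
    obtain ⟨K, hKgt⟩ := exists_nat_gt (1 / b)
    have hKb : ∀ j : ℕ, K ≤ j → 1 / (2 * (j:ℝ) + 1) ≤ b := by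
      intro j hj
      have hjb : 1 / b < (j:ℝ) := lt_of_lt_of_le hKgt (by exact_mod_cast hj)
      have hb' : 1 / b < 2 * (j:ℝ) + 1 := by linarith [Nat.cast_nonneg (α := ℝ) j]
      have h0 : (0:ℝ) < 2 * (j:ℝ) + 1 := by positivity
      rw [div_le_iff₀ h0]
      rw [div_lt_iff₀ hb] at hb'
      linarith
    set V := eVariationOn muOsc (Set.Icc a b) with hV
    set M := V.toReal with hM
    -- for each n, build a monotone sequence and get a lower bound
    have key : ∀ n : ℕ, (1/4 : ℝ) * ∑ i ∈ Finset.range n, 1 / ((K:ℝ) + (i:ℝ) + 1) ≤ M := by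
      intro n
      set u : ℕ → ℝ := fun i => 1 / (2 * ((K + (n - min i n) : ℕ) : ℝ) + 1) with hu
      have humem : ∀ i, u i ∈ Set.Icc a b := by
        intro i
        have h0 : (0:ℝ) < 2 * ((K + (n - min i n) : ℕ) : ℝ) + 1 := by positivity
        constructor
        · have : (0:ℝ) < u i := by rw [hu]; positivity
          linarith
        · exact hKb _ (Nat.le_add_right _ _)
      have humono : Monotone u := by
        intro i j hij
        rw [hu]
        simp only
        apply one_div_le_one_div_of_le (by positivity)
        have : (K + (n - min j n) : ℕ) ≤ (K + (n - min i n) : ℕ) := by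
          have : min i n ≤ min j n := min_le_min hij le_rfl
          omega
        have := (Nat.cast_le (α := ℝ)).2 this
        linarith
      have hsum := eVariationOn.sum_le (f := muOsc) (n := n) humono humem
      -- lower bound for each term
      have hterm : ∀ i ∈ Finset.range n,
          1 / (4 * (((K + (n - (i+1)) : ℕ) : ℝ) + 1)) ≤ dist (muOsc (u (i+1))) (muOsc (u i)) := by
        intro i hi
        rw [Finset.mem_range] at hi
        have hmin1 : min (i+1) n = i + 1 := min_eq_left hi
        have hmin0 : min i n = i := min_eq_left (le_of_lt hi)
        set j : ℕ := K + (n - (i+1)) with hj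
        have hji : (K + (n - min i n) : ℕ) = j + 1 := by rw [hmin0, hj]; omega
        have hji' : (K + (n - min (i+1) n) : ℕ) = j := by rw [hmin1, hj]
        have hu1 : u (i+1) = 1 / (2 * (j:ℝ) + 1) := by rw [hu]; simp only; rw [hji']
        have hu0 : u i = 1 / (2 * ((j:ℝ) + 1) + 1) := by
          rw [hu]; simp only; rw [hji]; push_cast; ring_nf
        rw [Real.dist_eq, hu1, hu0]
        exact muOsc_jump j
      -- sum the lower bounds, via edist
      have hENN : ENNReal.ofReal (∑ i ∈ Finset.range n,
          dist (muOsc (u (i+1))) (muOsc (u i))) ≤ V := by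
        rw [ENNReal.ofReal_sum_of_nonneg (fun i _ => dist_nonneg)]
        calc ∑ i ∈ Finset.range n, ENNReal.ofReal (dist (muOsc (u (i+1))) (muOsc (u i)))
            = ∑ i ∈ Finset.range n, edist (muOsc (u (i+1))) (muOsc (u i)) := by
              apply Finset.sum_congr rfl; intro i _; rw [edist_dist]
          _ ≤ V := hsum
      have hreal : ∑ i ∈ Finset.range n, dist (muOsc (u (i+1))) (muOsc (u i)) ≤ M := by
        rw [hM]
        exact (ENNReal.ofReal_le_iff_le_toReal hBV).1 hENN
      have hsum2 : ∑ i ∈ Finset.range n, 1 / (4 * (((K + (n - (i+1)) : ℕ) : ℝ) + 1))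
          ≤ ∑ i ∈ Finset.range n, dist (muOsc (u (i+1))) (muOsc (u i)) :=
        Finset.sum_le_sum hterm
      -- reindex left sum
      have hreflect : ∑ i ∈ Finset.range n, 1 / (4 * (((K + (n - (i+1)) : ℕ) : ℝ) + 1))
          = ∑ i ∈ Finset.range n, 1 / (4 * (((K + i : ℕ) : ℝ) + 1)) := by
        rw [← Finset.sum_range_reflect]
        apply Finset.sum_congr rfl
        intro i hi
        rw [Finset.mem_range] at hi
        congr 3
        have : K + (n - (n - 1 - i + 1)) = K + i := by omega
        rw [this]
      have hfinal : (1/4 : ℝ) * ∑ i ∈ Finset.range n, 1 / ((K:ℝ) + (i:ℝ) + 1)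
          = ∑ i ∈ Finset.range n, 1 / (4 * (((K + i : ℕ) : ℝ) + 1)) := by
        rw [Finset.mul_sum]
        apply Finset.sum_congr rfl
        intro i _
        have hc : ((K + i : ℕ) : ℝ) + 1 = (K:ℝ) + (i:ℝ) + 1 := by push_cast; ring
        rw [hc, div_mul_div_comm, one_mul]
      rw [hfinal, ← hreflect]
      linarith
    -- contradiction with divergence of harmonic series
    have hdiv := Real.tendsto_sum_range_one_div_nat_succ_atTop
    have hsub : ∀ n : ℕ, ∑ i ∈ Finset.range n, 1 / ((i:ℝ) + 1)
        ≤ ∑ i ∈ Finset.range n, 1 / ((K:ℝ) + (i:ℝ) + 1)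
          + ∑ i ∈ Finset.range K, 1 / ((i:ℝ) + 1) := by
      intro n
      have h1 : ∑ i ∈ Finset.range (K + n), 1 / ((i:ℝ) + 1)
          = ∑ i ∈ Finset.range K, 1 / ((i:ℝ) + 1)
            + ∑ i ∈ Finset.range n, 1 / (((K + i : ℕ) : ℝ) + 1) := by
        rw [Finset.sum_range_add]
      have h2 : ∑ i ∈ Finset.range n, 1 / (((K + i : ℕ) : ℝ) + 1)
          = ∑ i ∈ Finset.range n, 1 / ((K:ℝ) + (i:ℝ) + 1) := by
        apply Finset.sum_congr rfl; intro i _; push_cast; ring_nf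
      have h3 : ∑ i ∈ Finset.range n, 1 / ((i:ℝ) + 1)
          ≤ ∑ i ∈ Finset.range (K + n), 1 / ((i:ℝ) + 1) := by
        apply Finset.sum_le_sum_of_subset_of_nonneg
        · exact Finset.range_subset_range.2 (Nat.le_add_left n K)
        · intro i _ _; positivity
      rw [h1, h2] at h3
      linarith
    obtain ⟨n, hn⟩ := (hdiv.eventually_gt_atTop
      (4 * M + ∑ i ∈ Finset.range K, 1 / ((i:ℝ) + 1))).exists
    have h1 := key n
    have h2 := hsub n
    linarith
end

section
/- Let Gᵐ : Ω × ℝ^d → ℝ be a stochastic process with continuous sample paths that is shift equivariant: for every h ∈ ℝ^d, the process s ↦ Gᵐ(h+s) − Gᵐ(h) has the same law as Gᵐ. Then for any h ∈ ℝ^d, any measurable T ⊆ ℝ^d, and any compact S ⊂ ℝ^d on which Gᵐ has a unique maximizer a.s., P[argmax_{s∈S} Gᵐ(s) ∈ T] = P[argmax_{s∈S+h} Gᵐ(s) ∈ T + h]. -/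
open MeasureTheory Filter Topology

/-- For a continuous function with a unique maximizer on a compact set, the greedy
near-maximizer selection from a dense sequence converges to the maximizer. -/
lemma aux_tendsto_argmax {d : ℕ} {S : Set (Fin d → ℝ)} (hS : IsCompact S)
    {e : ℕ → (Fin d → ℝ)} (he : ∀ i, e i ∈ S) (hdense : S ⊆ closure (Set.range e))
    {g : (Fin d → ℝ) → ℝ} (hg : Continuous g)
    {m : Fin d → ℝ} (hmS : m ∈ S) (hm : ∀ s ∈ S, s ≠ m → g s < g m) :
    Tendsto (fun k : ℕ => e (sInf {i | ∀ j, g (e j) ≤ g (e i) + 1/(k+1)})) atTop (𝓝 m) := by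
  have hle : ∀ x ∈ S, g x ≤ g m := by
    intro x hx
    rcases eq_or_ne x m with rfl | hne
    · exact le_rfl
    · exact (hm x hx hne).le
  have key : ∀ ε : ℝ, 0 < ε → ∃ j, g m - ε < g (e j) := by
    intro ε hε
    have hmc : m ∈ closure (Set.range e) := hdense hmS
    have hU : IsOpen {x | g m - ε < g x} := isOpen_lt continuous_const hg
    have hmU : m ∈ {x | g m - ε < g x} := by simp [hε]
    rcases mem_closure_iff.1 hmc _ hU hmU with ⟨y, hy1, j, rfl⟩
    exact ⟨j, hy1⟩
  set N : ℕ → ℕ := fun k => sInf {i | ∀ j, g (e j) ≤ g (e i) + 1/(k+1)} with hN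
  have hne : ∀ k : ℕ, {i | ∀ j, g (e j) ≤ g (e i) + 1/(k+1)}.Nonempty := by
    intro k
    have hpos : (0:ℝ) < 1/(k+1) := by positivity
    obtain ⟨i, hi⟩ := key _ hpos
    exact ⟨i, fun j => le_trans (hle _ (he j)) (by linarith)⟩
  have hmem : ∀ k : ℕ, ∀ j, g (e j) ≤ g (e (N k)) + 1/(k+1) :=
    fun k => Nat.sInf_mem (hne k)
  -- g ∘ (selection) tends to g m
  have hgconv : Tendsto (fun k => g (e (N k))) atTop (𝓝 (g m)) := by
    rw [Metric.tendsto_atTop]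
    intro ε hε
    obtain ⟨j, hj⟩ := key (ε/2) (by linarith)
    obtain ⟨K, hK⟩ := exists_nat_one_div_lt (K := ℝ) (show (0:ℝ) < ε/2 by linarith)
    refine ⟨K, fun k hk => ?_⟩
    have h1 : 1/((k:ℝ)+1) ≤ 1/((K:ℝ)+1) := by
      apply one_div_le_one_div_of_le (by positivity)
      have : (K:ℝ) ≤ k := by exact_mod_cast hk
      linarith
    have h2 := hmem k j
    have h3 := hle (e (N k)) (he _)
    rw [Real.dist_eq, abs_lt]
    constructor <;> linarith
  -- now standard subsequence argument
  apply Filter.tendsto_of_subseq_tendsto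
  intro ns hns
  obtain ⟨x, hxS, φ, hφ, hconv⟩ := hS.tendsto_subseq (x := fun k => e (N (ns k)))
    (fun k => he (N (ns k)))
  have hgx : g x = g m := by
    have t1 : Tendsto (fun k => g (e (N (ns (φ k))))) atTop (𝓝 (g x)) :=
      (hg.continuousAt.tendsto).comp hconv
    have t2 : Tendsto (fun k => g (e (N (ns (φ k))))) atTop (𝓝 (g m)) :=
      hgconv.comp (hns.comp hφ.tendsto_atTop)
    exact tendsto_nhds_unique t1 t2
  have hxm : x = m := by
    by_contra hne'
    exact absurd hgx (ne_of_lt (hm x hxS hne'))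
  exact ⟨φ, by rw [← hxm]; exact hconv⟩

theorem argmax_shift_equivariance
    {Ω : Type*} [MeasurableSpace Ω] (P : Measure Ω) [IsProbabilityMeasure P]
    {d : ℕ} (G : Ω → (Fin d → ℝ) → ℝ)
    (hmeas : ∀ s : Fin d → ℝ, Measurable fun ω => G ω s)
    (hcont : ∀ ω, Continuous (G ω))
    (hshift : ∀ h : Fin d → ℝ,
      Measure.map (fun ω => fun s => G ω (h + s) - G ω h) P = Measure.map (fun ω => G ω) P)
    (h : Fin d → ℝ) (T : Set (Fin d → ℝ)) (hT : MeasurableSet T)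
    (S : Set (Fin d → ℝ)) (hS : IsCompact S)
    (aS aSh : Ω → Fin d → ℝ) (haSmeas : Measurable aS) (haShmeas : Measurable aSh)
    (haS : ∀ᵐ ω ∂P, aS ω ∈ S ∧ (∀ s ∈ S, s ≠ aS ω → G ω s < G ω (aS ω)))
    (haSh : ∀ᵐ ω ∂P, aSh ω ∈ (fun s => s + h) '' S ∧
      (∀ s ∈ (fun s => s + h) '' S, s ≠ aSh ω → G ω s < G ω (aSh ω))) :
    P {ω | aS ω ∈ T} = P {ω | aSh ω ∈ (fun t => t + h) '' T} := by
  classical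
  -- S is nonempty
  have hSne : S.Nonempty := by
    have : NeBot (ae P) := ae_neBot.2 (IsProbabilityMeasure.ne_zero P)
    obtain ⟨ω, hω⟩ := haS.exists
    exact ⟨aS ω, hω.1⟩
  -- a countable dense sequence in S
  obtain ⟨e, he, hdense⟩ : ∃ e : ℕ → (Fin d → ℝ),
      (∀ i, e i ∈ S) ∧ S ⊆ closure (Set.range e) := by
    have : Nonempty S := hSne.to_subtype
    obtain ⟨u, hu⟩ := TopologicalSpace.exists_dense_seq S
    refine ⟨fun n => (u n : Fin d → ℝ), fun n => (u n).2, ?_⟩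
    intro x hx
    have h2 : (⟨x, hx⟩ : S) ∈ closure (Set.range u) := hu _
    rw [closure_subtype] at h2
    have h3 : Subtype.val '' Set.range u = Set.range fun n => (u n : Fin d → ℝ) := by
      rw [← Set.range_comp]; rfl
    rwa [h3] at h2
  -- the selection maps
  set dk : ℕ → ((Fin d → ℝ) → ℝ) → (Fin d → ℝ) :=
    fun k g => e (sInf {i | ∀ j, g (e j) ≤ g (e i) + 1/(k+1)}) with hdk_def
  have hdkmeas : ∀ k, Measurable (dk k) := by
    intro k
    apply measurable_from_top.comp (f := fun g : (Fin d → ℝ) → ℝ =>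
      sInf {i | ∀ j, g (e j) ≤ g (e i) + 1/(k+1)})
    have hP : ∀ i : ℕ, MeasurableSet {g : (Fin d → ℝ) → ℝ | ∀ j, g (e j) ≤ g (e i) + 1/(k+1)} := by
      intro i
      have : {g : (Fin d → ℝ) → ℝ | ∀ j, g (e j) ≤ g (e i) + 1/(k+1)}
          = ⋂ j, {g : (Fin d → ℝ) → ℝ | g (e j) ≤ g (e i) + 1/(k+1)} := by
        ext g; simp [Set.mem_iInter]
      rw [this]
      exact MeasurableSet.iInter fun j =>
        measurableSet_le (measurable_pi_apply (e j))
          ((measurable_pi_apply (e i)).add_const _)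
    apply measurable_to_countable'
    intro n
    have hset : (fun g : (Fin d → ℝ) → ℝ => sInf {i | ∀ j, g (e j) ≤ g (e i) + 1/(k+1)}) ⁻¹' {n}
        = {g : (Fin d → ℝ) → ℝ | sInf {i | ∀ j, g (e j) ≤ g (e i) + 1/(k+1)} = n} := by
      ext g; simp
    rw [hset]
    by_cases hn : n = 0
    · subst hn
      have : {g : (Fin d → ℝ) → ℝ | sInf {i | ∀ j, g (e j) ≤ g (e i) + 1/(k+1)} = 0}
          = {g : (Fin d → ℝ) → ℝ | ∀ j, g (e j) ≤ g (e 0) + 1/(k+1)}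
            ∪ ⋂ i, {g : (Fin d → ℝ) → ℝ | ∀ j, g (e j) ≤ g (e i) + 1/(k+1)}ᶜ := by
        ext g
        simp only [Set.mem_setOf_eq, Set.mem_union, Set.mem_iInter, Set.mem_compl_iff]
        constructor
        · intro h0
          by_cases hne : {i | ∀ j, g (e j) ≤ g (e i) + 1/(k+1)}.Nonempty
          · left; have := Nat.sInf_mem hne; rwa [h0] at this
          · right; intro i hi; exact hne ⟨i, hi⟩
        · rintro (h0 | hall)
          · exact Nat.sInf_eq_zero.2 (Or.inl h0)
          · exact Nat.sInf_eq_zero.2 (Or.inr (Set.eq_empty_iff_forall_notMem.2 hall))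
      rw [this]
      exact (hP 0).union (MeasurableSet.iInter fun i => (hP i).compl)
    · have : {g : (Fin d → ℝ) → ℝ | sInf {i | ∀ j, g (e j) ≤ g (e i) + 1/(k+1)} = n}
          = {g : (Fin d → ℝ) → ℝ | ∀ j, g (e j) ≤ g (e n) + 1/(k+1)}
            ∩ ⋂ i ∈ Finset.range n, {g : (Fin d → ℝ) → ℝ | ∀ j, g (e j) ≤ g (e i) + 1/(k+1)}ᶜ := by
        ext g
        simp only [Set.mem_setOf_eq, Set.mem_inter_iff, Set.mem_iInter, Set.mem_compl_iff,
          Finset.mem_range]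
        constructor
        · intro h0
          have hne : {i | ∀ j, g (e j) ≤ g (e i) + 1/(k+1)}.Nonempty := by
            by_contra hemp
            rw [Set.not_nonempty_iff_eq_empty] at hemp
            rw [hemp] at h0
            simp [Nat.sInf_empty] at h0
            exact hn h0.symm
          constructor
          · have := Nat.sInf_mem hne; rwa [h0] at this
          · intro i hi hmem
            have := Nat.sInf_le (show i ∈ {i | ∀ j, g (e j) ≤ g (e i) + 1/(k+1)} from hmem)
            omega
        · rintro ⟨h1, h2⟩
          have hmem : n ∈ {i | ∀ j, g (e j) ≤ g (e i) + 1/(k+1)} := h1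
          have hle := Nat.sInf_le (show n ∈ {i | ∀ j, g (e j) ≤ g (e i) + 1/(k+1)} from h1)
          rcases lt_or_eq_of_le hle with hlt | heq
          · exact absurd (Nat.sInf_mem ⟨n, hmem⟩) (h2 _ hlt)
          · exact heq
      rw [this]
      exact (hP n).inter (MeasurableSet.iInter fun i => MeasurableSet.iInter fun _ => (hP i).compl)
  -- the convergence set
  set Conv : Set ((Fin d → ℝ) → ℝ) := {g | ∃ l, Tendsto (fun k => dk k g) atTop (𝓝 l)}
    with hConv_def
  have hConvMeas : MeasurableSet Conv := by
    have : Conv = {g | CauchySeq (fun k => dk k g)} := by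
      ext g
      constructor
      · rintro ⟨l, hl⟩; exact hl.cauchySeq
      · intro hc; exact cauchySeq_tendsto_of_complete hc
    rw [this]
    have : {g | CauchySeq (fun k => dk k g)}
        = ⋂ m : ℕ, ⋃ N : ℕ, ⋂ n : ℕ,
            {g : (Fin d → ℝ) → ℝ | N ≤ n → dist (dk n g) (dk N g) < 1/(m+1)} := by
      ext g
      simp only [Set.mem_setOf_eq, Set.mem_iInter, Set.mem_iUnion]
      rw [Metric.cauchySeq_iff']
      constructor
      · intro hc m
        obtain ⟨N, hN⟩ := hc (1/(m+1)) (by positivity)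
        exact ⟨N, fun n hn => hN n hn⟩
      · intro hc ε hε
        obtain ⟨m, hm⟩ := exists_nat_one_div_lt (K := ℝ) hε
        obtain ⟨N, hN⟩ := hc m
        exact ⟨N, fun n hn => lt_trans (hN n hn) hm⟩
    rw [this]
    refine MeasurableSet.iInter fun m => MeasurableSet.iUnion fun N =>
      MeasurableSet.iInter fun n => ?_
    by_cases hn : N ≤ n
    · have : {g : (Fin d → ℝ) → ℝ | N ≤ n → dist (dk n g) (dk N g) < 1/(m+1)}
          = {g | dist (dk n g) (dk N g) < 1/(m+1)} := by
        ext g; simp [hn]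
      rw [this]
      exact measurableSet_lt ((hdkmeas n).dist (hdkmeas N)) measurable_const
    · have : {g : (Fin d → ℝ) → ℝ | N ≤ n → dist (dk n g) (dk N g) < 1/(m+1)} = Set.univ := by
        ext g; simp [hn]
      rw [this]; exact MeasurableSet.univ
  -- the measurable limit map A
  set A : ((Fin d → ℝ) → ℝ) → (Fin d → ℝ) :=
    fun g => if hg : g ∈ Conv then hg.choose else 0 with hA_def
  have hAlim : ∀ g ∈ Conv, Tendsto (fun k => dk k g) atTop (𝓝 (A g)) := by
    intro g hg
    simp only [hA_def, dif_pos hg]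
    exact hg.choose_spec
  have hAmeas : Measurable A := by
    set f : ℕ → ((Fin d → ℝ) → ℝ) → (Fin d → ℝ) :=
      fun k g => if g ∈ Conv then dk k g else 0 with hf_def
    have hfmeas : ∀ k, Measurable (f k) :=
      fun k => Measurable.ite hConvMeas (hdkmeas k) measurable_const
    have hftend : Tendsto f atTop (𝓝 A) := by
      rw [tendsto_pi_nhds]
      intro g
      by_cases hg : g ∈ Conv
      · have := hAlim g hg
        simp only [hf_def, if_pos hg]
        exact this
      · simp only [hf_def, if_neg hg, hA_def, dif_neg hg]
        exact tendsto_const_nhds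
    exact measurable_of_tendsto_metrizable' atTop hfmeas hftend
  -- key pointwise identification lemma
  have hAeq : ∀ (g : (Fin d → ℝ) → ℝ), Continuous g → ∀ m ∈ S,
      (∀ s ∈ S, s ≠ m → g s < g m) → A g = m := by
    intro g hg m hmS hm
    have htd := aux_tendsto_argmax hS he hdense hg hmS hm
    have hgConv : g ∈ Conv := ⟨m, htd⟩
    exact tendsto_nhds_unique (hAlim g hgConv) htd
  -- measurability of the path maps
  have hGm : Measurable (fun ω => G ω) := measurable_pi_lambda _ hmeas
  have hΦGm : Measurable (fun ω => fun s => G ω (h + s) - G ω h) :=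
    measurable_pi_lambda _ (fun s => (hmeas _).sub (hmeas _))
  have hAT : MeasurableSet (A ⁻¹' T) := hAmeas hT
  -- first a.e. identity
  have hae1 : ∀ᵐ ω ∂P, aS ω = A (G ω) := by
    filter_upwards [haS] with ω hω
    exact (hAeq (G ω) (hcont ω) (aS ω) hω.1 hω.2).symm
  -- second a.e. identity: A applied to the shifted path is aSh ω - h
  have hae2 : ∀ᵐ ω ∂P, aSh ω - h = A (fun s => G ω (h + s) - G ω h) := by
    filter_upwards [haSh] with ω hω
    set g' : (Fin d → ℝ) → ℝ := fun s => G ω (h + s) - G ω h with hg'_def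
    have hg'c : Continuous g' :=
      ((hcont ω).comp (continuous_const.add continuous_id)).sub continuous_const
    obtain ⟨s₀, hs₀S, hs₀⟩ := hω.1
    have hmem : aSh ω - h ∈ S := by
      have : aSh ω - h = s₀ := by rw [← hs₀]; exact add_sub_cancel_right s₀ h
      rw [this]; exact hs₀S
    have hmax : ∀ s ∈ S, s ≠ aSh ω - h → g' s < g' (aSh ω - h) := by
      intro s hsS hsne
      have h1 : s + h ∈ (fun s => s + h) '' S := ⟨s, hsS, rfl⟩
      have h2 : s + h ≠ aSh ω := by
        intro heq
        apply hsne
        rw [← heq]; abel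
      have h3 := hω.2 (s + h) h1 h2
      have e1 : g' s = G ω (s + h) - G ω h := by
        show G ω (h + s) - G ω h = G ω (s + h) - G ω h
        rw [add_comm h s]
      have e2 : g' (aSh ω - h) = G ω (aSh ω) - G ω h := by
        show G ω (h + (aSh ω - h)) - G ω h = G ω (aSh ω) - G ω h
        rw [show h + (aSh ω - h) = aSh ω by abel]
      rw [e1, e2]
      linarith
    exact (hAeq g' hg'c _ hmem hmax).symm
  -- rewrite both probabilities as preimage measures
  have step1 : P {ω | aS ω ∈ T} = P ((fun ω => G ω) ⁻¹' (A ⁻¹' T)) := by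
    apply measure_congr
    rw [Filter.eventuallyEq_set]
    filter_upwards [hae1] with ω hω
    simp only [Set.mem_setOf_eq, Set.mem_preimage, hω]
  have step2 : P {ω | aSh ω ∈ (fun t => t + h) '' T}
      = P ((fun ω => fun s => G ω (h + s) - G ω h) ⁻¹' (A ⁻¹' T)) := by
    apply measure_congr
    rw [Filter.eventuallyEq_set]
    filter_upwards [hae2] with ω hω
    simp only [Set.mem_setOf_eq, Set.mem_preimage, ← hω]
    constructor
    · rintro ⟨t, ht, heq⟩
      have : aSh ω - h = t := by rw [← heq]; exact add_sub_cancel_right t h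
      rwa [this]
    · intro ht
      exact ⟨aSh ω - h, ht, by simp⟩
  rw [step1, step2, ← Measure.map_apply hGm hAT, ← Measure.map_apply hΦGm hAT, hshift h]
end

section
/- Suppose Z : Ω × ℝ → ℝ is a stochastic process with continuous sample paths and Z(0) = 0 a.s. If the law of Z restricted to any compact set is shift equivariant and the maximizer over any compact interval is a.s. unique, then P[argmax_{s ∈ [−N,N]} Z(s) = t] = 0 for any t with |t| < N. -/
open MeasureTheory

theorem no_atom_of_shift_equivariant_argmax_1d
    {Ω : Type*} [MeasurableSpace Ω] (P : Measure Ω) [IsProbabilityMeasure P]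
    (Z : Ω → ℝ → ℝ)
    (hmeas : ∀ s : ℝ, Measurable fun ω => Z ω s)
    (hcont : ∀ᵐ ω ∂P, Continuous (Z ω))
    (hZ0 : ∀ᵐ ω ∂P, Z ω 0 = 0)
    (hshift : ∀ h : ℝ,
      Measure.map (fun ω => fun s => Z ω (h + s) - Z ω h) P = Measure.map (fun ω => Z ω) P)
    (huniq : ∀ a b : ℝ, a ≤ b → ∀ᵐ ω ∂P,
      ∃! s, s ∈ Set.Icc a b ∧ IsMaxOn (Z ω) (Set.Icc a b) s)
    (N : ℝ) (hN : 0 < N)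
    (A : Ω → ℝ) (hA : Measurable A)
    (hAargmax : ∀ᵐ ω ∂P, A ω ∈ Set.Icc (-N) N ∧ IsMaxOn (Z ω) (Set.Icc (-N) N) (A ω))
    (t : ℝ) (ht : |t| < N) :
    P {ω | A ω = t} = 0 := by
  rw [abs_lt] at ht
  set ε : ℝ := min (N - t) (N + t) with hεdef
  have hε : 0 < ε := lt_min (by linarith [ht.2]) (by linarith [ht.1])
  have hε1 : ε ≤ N - t := min_le_left _ _
  have hε2 : ε ≤ N + t := min_le_right _ _
  -- countable dense subset of [0, ε]
  set D : Set ℝ := Set.Icc 0 ε ∩ Set.range ((↑) : ℚ → ℝ) with hDdef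
  have hDcount : D.Countable := (Set.countable_range _).mono Set.inter_subset_right
  have hDsub : D ⊆ Set.Icc 0 ε := Set.inter_subset_left
  have hDdense : Set.Icc 0 ε ⊆ closure D := by
    have h1 : Set.Ioo 0 ε ⊆ closure (Set.Ioo 0 ε ∩ Set.range ((↑) : ℚ → ℝ)) :=
      Rat.denseRange_cast.open_subset_closure_inter isOpen_Ioo
    have h2 : closure (Set.Ioo 0 ε ∩ Set.range ((↑) : ℚ → ℝ)) ⊆ closure D :=
      closure_mono (Set.inter_subset_inter_left _ Set.Ioo_subset_Icc_self)
    calc Set.Icc 0 ε = closure (Set.Ioo 0 ε) := (closure_Ioo hε.ne).symm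
      _ ⊆ closure (closure (Set.Ioo 0 ε ∩ Set.range ((↑) : ℚ → ℝ))) := closure_mono h1
      _ = closure (Set.Ioo 0 ε ∩ Set.range ((↑) : ℚ → ℝ)) := closure_closure
      _ ⊆ closure D := h2
  -- under continuity, max over D at r means max over [0,ε] at r
  have hmaxD : ∀ (ω : Ω) (r : ℝ), Continuous (Z ω) → (∀ s ∈ D, Z ω s ≤ Z ω r) →
      IsMaxOn (Z ω) (Set.Icc 0 ε) r := by
    intro ω r hc hD x hx
    have hclosed : IsClosed {y : ℝ | Z ω y ≤ Z ω r} := isClosed_le hc continuous_const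
    have : closure D ⊆ {y : ℝ | Z ω y ≤ Z ω r} := hclosed.closure_subset_iff.mpr hD
    exact this (hDdense hx)
  -- events G r
  set G : ℝ → Set Ω := fun r => ⋂ s ∈ D, {ω | Z ω s ≤ Z ω r} with hGdef
  have hGmeas : ∀ r, MeasurableSet (G r) := fun r =>
    MeasurableSet.biInter hDcount fun s _ => measurableSet_le (hmeas s) (hmeas r)
  have hGmem : ∀ r ω, ω ∈ G r ↔ ∀ s ∈ D, Z ω s ≤ Z ω r := by
    intro r ω; simp [hGdef]
  -- shift invariance of G-probabilities
  have hshiftG : ∀ (h r : ℝ),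
      P {ω | ∀ s ∈ D, Z ω (h + s) ≤ Z ω (h + r)} = P (G r) := by
    intro h r
    set B : Set (ℝ → ℝ) := ⋂ s ∈ D, {f | f s ≤ f r} with hBdef
    have hBmeas : MeasurableSet B :=
      MeasurableSet.biInter hDcount fun s _ =>
        measurableSet_le (measurable_pi_apply s) (measurable_pi_apply r)
    have hφ : Measurable (fun ω => fun s => Z ω (h + s) - Z ω h) :=
      measurable_pi_lambda _ fun s => (hmeas (h + s)).sub (hmeas h)
    have hψ : Measurable (fun ω => Z ω) := measurable_pi_lambda _ hmeas
    have key : P ((fun ω => fun s => Z ω (h + s) - Z ω h) ⁻¹' B) = P ((fun ω => Z ω) ⁻¹' B) := by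
      rw [← Measure.map_apply hφ hBmeas, ← Measure.map_apply hψ hBmeas, hshift h]
    have e1 : (fun ω => fun s => Z ω (h + s) - Z ω h) ⁻¹' B
        = {ω | ∀ s ∈ D, Z ω (h + s) ≤ Z ω (h + r)} := by
      ext ω
      simp only [hBdef, Set.mem_preimage, Set.mem_iInter, Set.mem_setOf_eq, Set.mem_setOf_eq]
      exact forall₂_congr fun s _ => sub_le_sub_iff_right _
    have e2 : (fun ω => Z ω) ⁻¹' B = G r := by
      ext ω; simp [hBdef, hGdef]
    rw [e1, e2] at key
    exact key
  -- the null "bad" set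
  have hbad : P ({ω | ¬ Continuous (Z ω)} ∪ {ω | ¬ (∃! s, s ∈ Set.Icc 0 ε ∧
      IsMaxOn (Z ω) (Set.Icc 0 ε) s)} ∪
      {ω | ¬ (A ω ∈ Set.Icc (-N) N ∧ IsMaxOn (Z ω) (Set.Icc (-N) N) (A ω))}) = 0 := by
    refine measure_union_null (measure_union_null ?_ ?_) ?_
    · exact hcont
    · exact huniq 0 ε hε.le
    · exact hAargmax
  set Nb : Set Ω := toMeasurable P ({ω | ¬ Continuous (Z ω)} ∪ {ω | ¬ (∃! s, s ∈ Set.Icc 0 ε ∧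
      IsMaxOn (Z ω) (Set.Icc 0 ε) s)} ∪
      {ω | ¬ (A ω ∈ Set.Icc (-N) N ∧ IsMaxOn (Z ω) (Set.Icc (-N) N) (A ω))}) with hNbdef
  have hNbnull : P Nb = 0 := by rw [hNbdef, measure_toMeasurable]; exact hbad
  have hNbmeas : MeasurableSet Nb := measurableSet_toMeasurable _ _
  have hNbsup := subset_toMeasurable P ({ω | ¬ Continuous (Z ω)} ∪ {ω | ¬ (∃! s, s ∈ Set.Icc 0 ε ∧
      IsMaxOn (Z ω) (Set.Icc 0 ε) s)} ∪
      {ω | ¬ (A ω ∈ Set.Icc (-N) N ∧ IsMaxOn (Z ω) (Set.Icc (-N) N) (A ω))})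
  -- good ω facts
  have hgood : ∀ ω ∉ Nb, Continuous (Z ω) ∧ (∃! s, s ∈ Set.Icc 0 ε ∧
      IsMaxOn (Z ω) (Set.Icc 0 ε) s) ∧
      (A ω ∈ Set.Icc (-N) N ∧ IsMaxOn (Z ω) (Set.Icc (-N) N) (A ω)) := by
    intro ω hω
    have h1 : ω ∉ ({ω | ¬ Continuous (Z ω)} ∪ {ω | ¬ (∃! s, s ∈ Set.Icc 0 ε ∧
      IsMaxOn (Z ω) (Set.Icc 0 ε) s)} ∪
      {ω | ¬ (A ω ∈ Set.Icc (-N) N ∧ IsMaxOn (Z ω) (Set.Icc (-N) N) (A ω))}) :=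
      fun h => hω (hNbsup h)
    simp only [Set.mem_union, Set.mem_setOf_eq, not_or, not_not] at h1
    exact ⟨h1.1.1, h1.1.2, h1.2⟩
  set p : ENNReal := P {ω | A ω = t} with hpdef
  -- bound: p ≤ P (G r) for any r ∈ [0, ε]
  have hpbound : ∀ r ∈ Set.Icc 0 ε, p ≤ P (G r) := by
    intro r hr
    rw [← hshiftG (t - r) r]
    have hsub : {ω | A ω = t} \ Nb ⊆ {ω | ∀ s ∈ D, Z ω (t - r + s) ≤ Z ω (t - r + r)} := by
      rintro ω ⟨hωA, hωNb⟩
      obtain ⟨-, -, hAt⟩ := hgood ω hωNb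
      rw [Set.mem_setOf_eq] at hωA
      rw [hωA] at hAt
      intro s hs
      have hsIcc := hDsub hs
      have h1 : t - r + s ∈ Set.Icc (-N) N := by
        constructor
        · have := hsIcc.1; have := hr.2; linarith
        · have := hsIcc.2; have := hr.1; linarith
      have := hAt.2 h1
      simpa using this
    calc p = P ({ω | A ω = t} \ Nb) := (measure_diff_null hNbnull).symm
      _ ≤ P {ω | ∀ s ∈ D, Z ω (t - r + s) ≤ Z ω (t - r + r)} := measure_mono hsub
  -- pigeonhole
  have hJ : ∀ J : ℕ, (J : ENNReal) * p ≤ 1 := by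
    intro J
    rcases Nat.eq_zero_or_pos J with hJ0 | hJpos
    · simp [hJ0]
    set r : ℕ → ℝ := fun j => ε * j / J with hrdef
    have hrIcc : ∀ j ∈ Finset.range J, r j ∈ Set.Icc 0 ε := by
      intro j hj
      rw [Finset.mem_range] at hj
      constructor
      · apply div_nonneg (mul_nonneg hε.le (Nat.cast_nonneg j)) (Nat.cast_nonneg J)
      · rw [div_le_iff₀ (by exact_mod_cast hJpos)]
        have : (j : ℝ) ≤ (J : ℝ) := by exact_mod_cast hj.le
        nlinarith
    set H : ℕ → Set Ω := fun j => G (r j) \ Nb with hHdef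
    have hHmeas : ∀ j ∈ Finset.range J, MeasurableSet (H j) := fun j _ =>
      (hGmeas (r j)).diff hNbmeas
    have hHdisj : (↑(Finset.range J) : Set ℕ).PairwiseDisjoint H := by
      intro j hj k hk hjk
      simp only [Finset.coe_sort_coe, Set.disjoint_left]
      rintro ω ⟨hωG, hωNb⟩ ⟨hωG', -⟩
      obtain ⟨hc, huni, -⟩ := hgood ω hωNb
      have hmj : IsMaxOn (Z ω) (Set.Icc 0 ε) (r j) :=
        hmaxD ω (r j) hc ((hGmem (r j) ω).mp hωG)
      have hmk : IsMaxOn (Z ω) (Set.Icc 0 ε) (r k) :=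
        hmaxD ω (r k) hc ((hGmem (r k) ω).mp hωG')
      obtain ⟨s₀, -, hs₀⟩ := huni
      have hj' : r j = s₀ := hs₀ _ ⟨hrIcc j hj, hmj⟩
      have hk' : r k = s₀ := hs₀ _ ⟨hrIcc k hk, hmk⟩
      apply hjk
      have : r j = r k := hj'.trans hk'.symm
      have hJR : (J : ℝ) ≠ 0 := by exact_mod_cast hJpos.ne'
      have : (j : ℝ) = (k : ℝ) := by
        have h2 : ε * j / J = ε * k / J := this
        rw [div_left_inj' hJR] at h2
        exact mul_left_cancel₀ hε.ne' h2
      exact_mod_cast this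
    have hsum : ∑ j ∈ Finset.range J, P (H j) ≤ 1 := by
      rw [← measure_biUnion_finset hHdisj hHmeas]
      exact prob_le_one
    have hHeq : ∀ j ∈ Finset.range J, P (H j) = P (G (r j)) := fun j _ =>
      measure_diff_null hNbnull
    have hple : ∀ j ∈ Finset.range J, p ≤ P (H j) := by
      intro j hj
      rw [hHeq j hj]
      exact hpbound (r j) (hrIcc j hj)
    calc (J : ENNReal) * p = ∑ _j ∈ Finset.range J, p := by
          simp [Finset.sum_const, mul_comm]
      _ ≤ ∑ j ∈ Finset.range J, P (H j) := Finset.sum_le_sum hple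
      _ ≤ 1 := hsum
  -- conclude p = 0
  by_contra hp
  have hp1 : p ≤ 1 := prob_le_one
  have hpne : p ≠ ⊤ := (lt_of_le_of_lt hp1 ENNReal.one_lt_top).ne
  obtain ⟨n, hn⟩ := ENNReal.exists_nat_gt (ENNReal.inv_ne_top.mpr hp : p⁻¹ ≠ ⊤)
  have : (n : ENNReal) ≤ p⁻¹ := ENNReal.le_inv_iff_mul_le.mpr (hJ n)
  exact absurd hn (not_lt.mpr this)
end

section
/- With e(ω; s) = [1{0 ≤ ω₁ ≤ x's} + 1{x's ≤ ω₁ < 0}]·√g(x) and l(ω) = −2·1{|ω₁| ≤ N√d‖x‖}·|ω₁|·q(x)·√g(x) for measurable g ≥ 0 and q on ℝ^d, one has ∫ e(ω;s)·l(ω) d(λ×P_x)(ω) = −s' E[q(x)g(x) x x'] s for all s ∈ [−N,N]^d, provided E[q(x)g(x)‖x‖²] < ∞. -/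
open MeasureTheory Matrix

lemma Sset_eq_pos {a : ℝ} (ha : 0 ≤ a) :
    {t : ℝ | (0 ≤ t ∧ t ≤ a) ∨ (a ≤ t ∧ t < 0)} = Set.Icc 0 a := by
  ext t
  simp only [Set.mem_setOf_eq, Set.mem_Icc]
  constructor
  · rintro (⟨h1, h2⟩ | ⟨h1, h2⟩)
    · exact ⟨h1, h2⟩
    · linarith
  · exact fun h => Or.inl h

lemma Sset_eq_neg {a : ℝ} (ha : a < 0) :
    {t : ℝ | (0 ≤ t ∧ t ≤ a) ∨ (a ≤ t ∧ t < 0)} = Set.Ico a 0 := by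
  ext t
  simp only [Set.mem_setOf_eq, Set.mem_Ico]
  constructor
  · rintro (⟨h1, h2⟩ | ⟨h1, h2⟩)
    · linarith
    · exact ⟨h1, h2⟩
  · exact fun h => Or.inr h

lemma Sset_meas (a : ℝ) :
    MeasurableSet {t : ℝ | (0 ≤ t ∧ t ≤ a) ∨ (a ≤ t ∧ t < 0)} := by
  rcases le_or_gt 0 a with ha | ha
  · rw [Sset_eq_pos ha]; exact measurableSet_Icc
  · rw [Sset_eq_neg ha]; exact measurableSet_Ico

lemma Sset_integrable (a : ℝ) :
    Integrable (({t : ℝ | (0 ≤ t ∧ t ≤ a) ∨ (a ≤ t ∧ t < 0)}).indicator (fun t => |t|)) := by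
  rw [integrable_indicator_iff (Sset_meas a)]
  rcases le_or_gt 0 a with ha | ha
  · rw [Sset_eq_pos ha]; exact continuous_abs.integrableOn_Icc
  · rw [Sset_eq_neg ha]
    exact (continuous_abs.integrableOn_Icc (a := a) (b := 0)).mono_set Set.Ico_subset_Icc_self

lemma Sset_integral (a : ℝ) :
    ∫ t, ({t : ℝ | (0 ≤ t ∧ t ≤ a) ∨ (a ≤ t ∧ t < 0)}).indicator (fun t => |t|) t = a ^ 2 / 2 := by
  rw [integral_indicator (Sset_meas a)]
  rcases le_or_gt 0 a with ha | ha
  · rw [Sset_eq_pos ha,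
      setIntegral_congr_fun measurableSet_Icc (g := fun t => t)
        (fun t ht => abs_of_nonneg ht.1),
      MeasureTheory.integral_Icc_eq_integral_Ioc, ← intervalIntegral.integral_of_le ha,
      integral_id]
    ring
  · rw [Sset_eq_neg ha,
      setIntegral_congr_fun measurableSet_Ico (g := fun t => -t)
        (fun t ht => abs_of_neg ht.2),
      MeasureTheory.integral_Ico_eq_integral_Ioo, ← MeasureTheory.integral_Ioc_eq_integral_Ioo,
      ← intervalIntegral.integral_of_le ha.le, intervalIntegral.integral_neg,
      integral_id]
    ring

lemma dot_bound {d : ℕ} {N : ℝ} (hN : 0 < N) {s : Fin d → ℝ}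
    (hs : ∀ i, s i ∈ Set.Icc (-N) N) (x : Fin d → ℝ) :
    |x ⬝ᵥ s| ≤ N * Real.sqrt d * Real.sqrt (∑ i, (x i) ^ 2) := by
  have h1 : (x ⬝ᵥ s) ^ 2 ≤ (∑ i, (x i) ^ 2) * (∑ i, (s i) ^ 2) :=
    Finset.sum_mul_sq_le_sq_mul_sq _ _ _
  have h2 : (∑ i, (s i) ^ 2) ≤ d * N ^ 2 := by
    calc (∑ i, (s i) ^ 2) ≤ ∑ _i : Fin d, N ^ 2 := by
          apply Finset.sum_le_sum
          intro i _
          have := hs i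
          rw [Set.mem_Icc] at this
          nlinarith [this.1, this.2]
      _ = d * N ^ 2 := by simp [Finset.sum_const]
  have hx0 : (0:ℝ) ≤ ∑ i, (x i) ^ 2 := Finset.sum_nonneg fun i _ => sq_nonneg _
  have h3 : (x ⬝ᵥ s) ^ 2 ≤ (∑ i, (x i) ^ 2) * (d * N ^ 2) := by
    calc (x ⬝ᵥ s) ^ 2 ≤ (∑ i, (x i) ^ 2) * (∑ i, (s i) ^ 2) := h1
      _ ≤ (∑ i, (x i) ^ 2) * (d * N ^ 2) := mul_le_mul_of_nonneg_left h2 hx0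
  calc |x ⬝ᵥ s| = Real.sqrt ((x ⬝ᵥ s) ^ 2) := (Real.sqrt_sq_eq_abs _).symm
    _ ≤ Real.sqrt ((∑ i, (x i) ^ 2) * (d * N ^ 2)) := Real.sqrt_le_sqrt h3
    _ = N * Real.sqrt d * Real.sqrt (∑ i, (x i) ^ 2) := by
        rw [Real.sqrt_mul hx0, Real.sqrt_mul (by positivity), Real.sqrt_sq hN.le]
        ring

theorem eMS_mean_representation
    {d : ℕ} (Px : Measure (Fin d → ℝ)) [IsProbabilityMeasure Px]
    (g q : (Fin d → ℝ) → ℝ) (hg : Measurable g) (hq : Measurable q)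
    (hg0 : ∀ x, 0 ≤ g x)
    (hInt : Integrable (fun x : Fin d → ℝ => q x * g x * (∑ i, (x i) ^ 2)) Px)
    (N : ℝ) (hN : 0 < N)
    (s : Fin d → ℝ) (hs : ∀ i, s i ∈ Set.Icc (-N) N) :
    (∫ ω : ℝ × (Fin d → ℝ),
        ((if (0 ≤ ω.1 ∧ ω.1 ≤ ω.2 ⬝ᵥ s) ∨ (ω.2 ⬝ᵥ s ≤ ω.1 ∧ ω.1 < 0) then (1 : ℝ) else 0)
            * Real.sqrt (g ω.2)) *
        ((-2) * (if |ω.1| ≤ N * Real.sqrt d * Real.sqrt (∑ i, (ω.2 i) ^ 2) then (1 : ℝ) else 0)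
            * |ω.1| * q ω.2 * Real.sqrt (g ω.2))
        ∂((volume : Measure ℝ).prod Px)) =
      -(∫ x, q x * g x * (x ⬝ᵥ s) ^ 2 ∂Px) := by
  set F : ℝ × (Fin d → ℝ) → ℝ := fun ω =>
    (-2 * (q ω.2 * g ω.2)) *
      ({t : ℝ | (0 ≤ t ∧ t ≤ ω.2 ⬝ᵥ s) ∨ (ω.2 ⬝ᵥ s ≤ t ∧ t < 0)}).indicator
        (fun t => |t|) ω.1 with hF
  -- pointwise identity
  have hpt : ∀ ω : ℝ × (Fin d → ℝ),
      ((if (0 ≤ ω.1 ∧ ω.1 ≤ ω.2 ⬝ᵥ s) ∨ (ω.2 ⬝ᵥ s ≤ ω.1 ∧ ω.1 < 0) then (1 : ℝ) else 0)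
          * Real.sqrt (g ω.2)) *
        ((-2) * (if |ω.1| ≤ N * Real.sqrt d * Real.sqrt (∑ i, (ω.2 i) ^ 2) then (1 : ℝ) else 0)
          * |ω.1| * q ω.2 * Real.sqrt (g ω.2)) = F ω := by
    rintro ⟨t, x⟩
    by_cases h : (0 ≤ t ∧ t ≤ x ⬝ᵥ s) ∨ (x ⬝ᵥ s ≤ t ∧ t < 0)
    · have habs : |t| ≤ |x ⬝ᵥ s| := by
        rcases h with ⟨h1, h2⟩ | ⟨h1, h2⟩
        · rw [abs_of_nonneg h1]; exact le_trans h2 (le_abs_self _)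
        · have ha : x ⬝ᵥ s < 0 := lt_of_le_of_lt h1 h2
          rw [abs_of_neg h2, abs_of_neg ha]; linarith
      have h2if : |t| ≤ N * Real.sqrt d * Real.sqrt (∑ i, (x i) ^ 2) :=
        le_trans habs (dot_bound hN hs x)
      have hgx : Real.sqrt (g x) * Real.sqrt (g x) = g x := Real.mul_self_sqrt (hg0 x)
      simp only [hF, if_pos h, if_pos h2if,
        Set.indicator_of_mem (show t ∈ {t : ℝ | (0 ≤ t ∧ t ≤ x ⬝ᵥ s) ∨ (x ⬝ᵥ s ≤ t ∧ t < 0)} from h)]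
      linear_combination (-2 * |t| * q x) * hgx
    · simp only [hF, if_neg h,
        Set.indicator_of_notMem (show t ∉ {t : ℝ | (0 ≤ t ∧ t ≤ x ⬝ᵥ s) ∨ (x ⬝ᵥ s ≤ t ∧ t < 0)} from h)]
      ring
  rw [integral_congr_ae (Filter.Eventually.of_forall hpt)]
  -- measurability
  have hdot : Measurable fun x : Fin d → ℝ => x ⬝ᵥ s := by
    simp only [dotProduct]
    exact Finset.measurable_sum _ fun i _ => (measurable_pi_apply i).mul_const _
  have hsetmeas : MeasurableSet {ω : ℝ × (Fin d → ℝ) |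
      (0 ≤ ω.1 ∧ ω.1 ≤ ω.2 ⬝ᵥ s) ∨ (ω.2 ⬝ᵥ s ≤ ω.1 ∧ ω.1 < 0)} := by
    apply MeasurableSet.union
    · exact (measurableSet_le measurable_const measurable_fst).inter
        (measurableSet_le measurable_fst (hdot.comp measurable_snd))
    · exact (measurableSet_le (hdot.comp measurable_snd) measurable_fst).inter
        (measurableSet_lt measurable_fst measurable_const)
  have hFmeas : Measurable F := by
    have : F = fun ω : ℝ × (Fin d → ℝ) => (-2 * (q ω.2 * g ω.2)) *
        (if (0 ≤ ω.1 ∧ ω.1 ≤ ω.2 ⬝ᵥ s) ∨ (ω.2 ⬝ᵥ s ≤ ω.1 ∧ ω.1 < 0) then |ω.1| else 0) := by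
      funext ω
      simp [hF, Set.indicator_apply, Set.mem_setOf_eq]
    rw [this]
    exact ((measurable_const.mul ((hq.comp measurable_snd).mul (hg.comp measurable_snd)))).mul
      (Measurable.ite hsetmeas measurable_fst.abs measurable_const)
  -- norm of inner integral
  have hnormint : ∀ x : Fin d → ℝ, (∫ t, ‖F (t, x)‖) = |q x| * g x * (x ⬝ᵥ s) ^ 2 := by
    intro x
    have : (fun t => ‖F (t, x)‖) = fun t => |(-2 * (q x * g x))| *
        ({t : ℝ | (0 ≤ t ∧ t ≤ x ⬝ᵥ s) ∨ (x ⬝ᵥ s ≤ t ∧ t < 0)}).indicator (fun t => |t|) t := by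
      funext t
      rw [hF]
      simp only [Real.norm_eq_abs, abs_mul]
      congr 1
      rw [abs_of_nonneg (Set.indicator_nonneg (fun y _ => abs_nonneg y) t)]
    rw [this, MeasureTheory.integral_const_mul, Sset_integral]
    have habs : |(-2 : ℝ) * (q x * g x)| = 2 * (|q x| * g x) := by
      rw [abs_mul, abs_mul, abs_of_nonneg (hg0 x)]
      norm_num
    rw [habs]
    ring
  -- integrability
  have hFint : Integrable F ((volume : Measure ℝ).prod Px) := by
    rw [integrable_prod_iff' hFmeas.aestronglyMeasurable]
    constructor
    · refine Filter.Eventually.of_forall fun x => ?_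
      simp only [hF]
      exact (Sset_integrable _).const_mul _
    · rw [show (fun x => ∫ t, ‖F (t, x)‖) = fun x => |q x| * g x * (x ⬝ᵥ s) ^ 2 from
        funext hnormint]
      apply Integrable.mono' ((hInt.abs).const_mul ((d : ℝ) * N ^ 2))
      · exact (hq.abs.mul hg).mul (hdot.pow_const 2) |>.aestronglyMeasurable
      · apply Filter.Eventually.of_forall
        intro x
        have hx0 : (0:ℝ) ≤ ∑ i, (x i) ^ 2 := Finset.sum_nonneg fun i _ => sq_nonneg _
        have hb := dot_bound hN hs x
        have hsq : (x ⬝ᵥ s) ^ 2 ≤ (d : ℝ) * N ^ 2 * (∑ i, (x i) ^ 2) := by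
          have h1 : (x ⬝ᵥ s) ^ 2 = |x ⬝ᵥ s| ^ 2 := (sq_abs _).symm
          have h2 : |x ⬝ᵥ s| ^ 2 ≤ (N * Real.sqrt d * Real.sqrt (∑ i, (x i) ^ 2)) ^ 2 :=
            pow_le_pow_left₀ (abs_nonneg _) hb 2
          have h3 : (N * Real.sqrt d * Real.sqrt (∑ i, (x i) ^ 2)) ^ 2
              = (d : ℝ) * N ^ 2 * (∑ i, (x i) ^ 2) := by
            rw [mul_pow, mul_pow, Real.sq_sqrt (Nat.cast_nonneg d), Real.sq_sqrt hx0]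
            ring
          rw [h1, ← h3]; exact h2
        rw [Real.norm_eq_abs,
          abs_of_nonneg (mul_nonneg (mul_nonneg (abs_nonneg _) (hg0 x)) (sq_nonneg _))]
        calc |q x| * g x * (x ⬝ᵥ s) ^ 2
            ≤ |q x| * g x * ((d : ℝ) * N ^ 2 * (∑ i, (x i) ^ 2)) := by
              exact mul_le_mul_of_nonneg_left hsq (mul_nonneg (abs_nonneg _) (hg0 x))
          _ = (d : ℝ) * N ^ 2 * (|q x| * g x * (∑ i, (x i) ^ 2)) := by ring
          _ ≤ (d : ℝ) * N ^ 2 * |q x * g x * (∑ i, (x i) ^ 2)| := by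
              apply mul_le_mul_of_nonneg_left _ (by positivity)
              rw [abs_mul, abs_mul, abs_of_nonneg (hg0 x), abs_of_nonneg hx0]
          _ = (d : ℝ) * N ^ 2 * |q x * g x * (∑ i, (x i) ^ 2)| := rfl
  rw [integral_prod_symm F hFint]
  have hinner : ∀ x : Fin d → ℝ, (∫ t, F (t, x)) = -(q x * g x * (x ⬝ᵥ s) ^ 2) := by
    intro x
    simp only [hF]
    rw [MeasureTheory.integral_const_mul, Sset_integral]
    ring
  rw [integral_congr_ae (Filter.Eventually.of_forall hinner), integral_neg]
end
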